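/- The covariance function r(t,s) = (1/2)(|t|^{2H} + |s|^{2H} - |t-s|^{2H}) on [0,∞)×[0,∞) is positive semidefinite for every H ∈ (0,1]: for any finite collection of times t_1,...,t_n ≥ 0 and reals c_1,...,c_n, the double sum Σ_{i,j} c_i c_j r(t_i,t_j) ≥ 0. -/

import Mathlib

/-!
For `0 < β < 2` the integral `∫₀^∞ (1 - cos (x u)) u ^ (-β - 1) du` converges and, substituting
`v = |x| u`, equals `C |x| ^ β` with `C > 0`. For `ψ x = 1 - cos (x u)` the quadratic form
`∑ c_i c_j (ψ t_i + ψ t_j - ψ (t_i - t_j))` is a sum of two squares, by the addition formula for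
`cos`, so integrating in `u` shows the form is nonnegative for `ψ = |·| ^ β`; for `β = 2` it is
`2 (∑ c_i t_i) ^ 2`. With `β = 2H` and `t_i ≥ 0` this form is twice the double sum of the theorem.
-/

open Real MeasureTheory Set Finset

/-- For a centred process `X` with stationary increments and `Var (X t) = ψ t`, this is
`2 Var (∑ i, c i * X (t i))`. -/
def incrementCovForm {ι : Type*} [Fintype ι] (ψ : ℝ → ℝ) (t c : ι → ℝ) : ℝ :=
  ∑ i, ∑ j, c i * c j * (ψ (t i) + ψ (t j) - ψ (t i - t j))

section IncrementCovForm

variable {ι : Type*} [Fintype ι] (t c : ι → ℝ)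

lemma incrementCovForm_mul_const (ψ : ℝ → ℝ) (a : ℝ) :
    incrementCovForm (fun x => ψ x * a) t c = incrementCovForm ψ t c * a := by
  simp only [incrementCovForm, sum_mul]
  exact sum_congr rfl fun i _ => sum_congr rfl fun j _ => by ring

lemma incrementCovForm_sq :
    incrementCovForm (fun x => x ^ 2) t c = 2 * (∑ i, c i * t i) ^ 2 := by
  rw [incrementCovForm, sq, sum_mul_sum]
  simp only [mul_sum]
  exact sum_congr rfl fun i _ => sum_congr rfl fun j _ => by ring

lemma incrementCovForm_one_sub_cos (a : ℝ) :
    incrementCovForm (fun x => 1 - cos (x * a)) t c =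
      (∑ i, c i * (1 - cos (t i * a))) ^ 2 + (∑ i, c i * sin (t i * a)) ^ 2 := by
  simp only [incrementCovForm, sq, sum_mul_sum, ← sum_add_distrib]
  refine sum_congr rfl fun i _ => sum_congr rfl fun j _ => ?_
  rw [sub_mul, cos_sub]
  ring

lemma incrementCovForm_integral_nonneg {α : Type*} [MeasurableSpace α] {μ : Measure α}
    {f : α → ℝ → ℝ} (hf : ∀ x, Integrable (fun u => f u x) μ)
    (hpos : ∀ᵐ u ∂μ, 0 ≤ incrementCovForm (f u) t c) :
    0 ≤ incrementCovForm (fun x => ∫ u, f u x ∂μ) t c := by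
  have hterm : ∀ i j,
      Integrable (fun u => c i * c j * (f u (t i) + f u (t j) - f u (t i - t j))) μ :=
    fun i j => (((hf _).add (hf _)).sub (hf _)).const_mul _
  have hlinear :
      ∫ u, incrementCovForm (f u) t c ∂μ = incrementCovForm (fun x => ∫ u, f u x ∂μ) t c := by
    simp only [incrementCovForm]
    rw [integral_finsetSum _ fun i _ => integrable_finsetSum _ fun j _ => hterm i j]
    refine sum_congr rfl fun i _ => ?_
    rw [integral_finsetSum _ fun j _ => hterm i j]
    refine sum_congr rfl fun j _ => ?_
    have hsum : Integrable (fun u => f u (t i) + f u (t j)) μ := (hf _).add (hf _)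
    rw [integral_const_mul, integral_sub hsum (hf _), integral_add (hf _) (hf _)]
  exact hlinear ▸ integral_nonneg_of_ae hpos

end IncrementCovForm

section OneSubCosRpow

variable {β : ℝ}

lemma integrableOn_one_sub_cos_mul_rpow (hβ0 : 0 < β) (hβ2 : β < 2) (x : ℝ) :
    IntegrableOn (fun u => (1 - cos (x * u)) * u ^ (-β - 1)) (Ioi 0) := by
  have hmeas : AEStronglyMeasurable (fun u => (1 - cos (x * u)) * u ^ (-β - 1)) volume :=
    (by fun_prop : Measurable _).aestronglyMeasurable
  have hnorm : ∀ u ∈ Ioi (0 : ℝ),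
      ‖(1 - cos (x * u)) * u ^ (-β - 1)‖ = (1 - cos (x * u)) * u ^ (-β - 1) := fun u hu =>
    Real.norm_of_nonneg (mul_nonneg (sub_nonneg.2 (cos_le_one _)) (rpow_nonneg (le_of_lt hu) _))
  have hnear : IntegrableOn (fun u => (1 - cos (x * u)) * u ^ (-β - 1)) (Ioc 0 1) := by
    refine Integrable.mono' (((intervalIntegral.intervalIntegrable_rpow' (a := 0) (b := 1)
      (r := 1 - β) (by linarith)).1).const_mul (x ^ 2 / 2)) hmeas.restrict ?_
    refine (ae_restrict_mem measurableSet_Ioc).mono fun u hu => ?_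
    -- `1 - cos y ≤ y ^ 2 / 2` and `u ^ 2 * u ^ (-β - 1) = u ^ (1 - β)`
    have hu0 : 0 < u := hu.1
    rw [hnorm u hu0, show u ^ (1 - β) = u ^ 2 * u ^ (-β - 1) by
      rw [← rpow_natCast, ← rpow_add hu0]; norm_num; ring_nf]
    have := one_sub_sq_div_two_le_cos (x := x * u)
    have := rpow_nonneg hu0.le (-β - 1)
    nlinarith
  have hfar : IntegrableOn (fun u => (1 - cos (x * u)) * u ^ (-β - 1)) (Ioi 1) := by
    refine Integrable.mono'
      ((integrableOn_Ioi_rpow_of_lt (a := -β - 1) (by linarith) one_pos).const_mul 2)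
      hmeas.restrict ?_
    refine (ae_restrict_mem measurableSet_Ioi).mono fun u hu => ?_
    have hu0 : (0 : ℝ) < u := one_pos.trans hu
    rw [hnorm u hu0]
    have := neg_one_le_cos (x * u)
    exact mul_le_mul_of_nonneg_right (by linarith) (rpow_nonneg hu0.le _)
  simpa only [Ioc_union_Ioi_eq_Ioi zero_le_one] using hnear.union hfar

lemma integral_one_sub_cos_rpow_pos (hβ0 : 0 < β) (hβ2 : β < 2) :
    0 < ∫ u in Ioi 0, (1 - cos u) * u ^ (-β - 1) := by
  have hint := integrableOn_one_sub_cos_mul_rpow hβ0 hβ2 1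
  simp only [one_mul] at hint
  rw [setIntegral_pos_iff_support_of_nonneg_ae _ hint]
  · refine ((Measure.measure_Ioo_pos volume).2 two_pi_pos).trans_le
      (measure_mono fun u hu => ⟨?_, hu.1⟩)
    have hcos : cos u ≠ 1 := fun h =>
      hu.1.ne' ((cos_eq_one_iff_of_lt_of_lt (by linarith [hu.1, two_pi_pos]) hu.2).1 h)
    exact mul_ne_zero (sub_ne_zero.2 hcos.symm) (rpow_pos_of_pos hu.1 _).ne'
  · exact (ae_restrict_mem measurableSet_Ioi).mono fun u hu =>
      mul_nonneg (sub_nonneg.2 (cos_le_one u)) (rpow_nonneg (le_of_lt hu) _)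

lemma integral_one_sub_cos_mul_rpow (hβ0 : 0 < β) (x : ℝ) :
    ∫ u in Ioi 0, (1 - cos (x * u)) * u ^ (-β - 1) =
      |x| ^ β * ∫ u in Ioi 0, (1 - cos u) * u ^ (-β - 1) := by
  have habs : ∀ u, cos (x * u) = cos (|x| * u) := fun u => by
    rcases abs_choice x with h | h <;> rw [h]
    rw [neg_mul, cos_neg]
  simp only [habs]
  rcases (abs_nonneg x).eq_or_lt with h | h
  · simp [← h, zero_rpow hβ0.ne']
  set a := |x|
  calc ∫ u in Ioi 0, (1 - cos (a * u)) * u ^ (-β - 1)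
      = ∫ u in Ioi 0, a ^ (β + 1) * ((1 - cos (a * u)) * (a * u) ^ (-β - 1)) := by
        refine setIntegral_congr_fun measurableSet_Ioi fun u hu => ?_
        rw [mul_rpow h.le (le_of_lt hu), mul_left_comm, ← mul_assoc (a ^ (β + 1)),
          ← rpow_add h]
        norm_num
    _ = a ^ β * ∫ u in Ioi 0, (1 - cos u) * u ^ (-β - 1) := by
        rw [integral_const_mul, integral_comp_mul_left_Ioi (fun v => (1 - cos v) * v ^ (-β - 1))
          0 h, mul_zero, smul_eq_mul, ← mul_assoc, ← rpow_neg_one, ← rpow_add h]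
        norm_num

end OneSubCosRpow

lemma incrementCovForm_abs_rpow_nonneg {ι : Type*} [Fintype ι] (t c : ι → ℝ) {β : ℝ}
    (hβ0 : 0 < β) (hβ2 : β ≤ 2) : 0 ≤ incrementCovForm (fun x => |x| ^ β) t c := by
  rcases hβ2.eq_or_lt with rfl | hβ2
  · have hsq : (fun x : ℝ => |x| ^ (2 : ℝ)) = fun x => x ^ 2 := by
      funext x
      rw [rpow_two, sq_abs]
    rw [hsq, incrementCovForm_sq]
    positivity
  -- Up to the positive factor `C`, `|x| ^ β` is a mixture of the functions `1 - cos (x * u)`.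
  set C := ∫ u in Ioi 0, (1 - cos u) * u ^ (-β - 1)
  have hmixture : 0 ≤ incrementCovForm (fun x => |x| ^ β * C) t c := by
    simp only [C, ← integral_one_sub_cos_mul_rpow hβ0]
    refine incrementCovForm_integral_nonneg t c (integrableOn_one_sub_cos_mul_rpow hβ0 hβ2)
      (ae_restrict_of_forall_mem measurableSet_Ioi fun u hu => ?_)
    rw [incrementCovForm_mul_const, incrementCovForm_one_sub_cos]
    exact mul_nonneg (by positivity) (rpow_nonneg (le_of_lt hu) _)
  rw [incrementCovForm_mul_const] at hmixture
  exact nonneg_of_mul_nonneg_left hmixture (integral_one_sub_cos_rpow_pos hβ0 hβ2)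

/-- The fBM covariance function `r(t,s) = (1/2)(t^(2H) + s^(2H) - |t-s|^(2H))` is
positive semidefinite on `[0,∞)` for every `H ∈ (0,1]`. -/
theorem fbm_cov_posSemidef (H : ℝ) (hH : H ∈ Set.Ioc (0 : ℝ) 1) :
    ∀ (n : ℕ) (t : Fin n → ℝ) (c : Fin n → ℝ), (∀ i, 0 ≤ t i) →
      0 ≤ ∑ i, ∑ j, c i * c j *
        ((1 / 2) * ((t i) ^ (2 * H) + (t j) ^ (2 * H) - |t i - t j| ^ (2 * H))) := by
  intro n t c ht
  have hform := incrementCovForm_abs_rpow_nonneg t c (β := 2 * H)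
    (by linarith [hH.1]) (by linarith [hH.2])
  calc 0 ≤ 1 / 2 * incrementCovForm (fun x => |x| ^ (2 * H)) t c :=
        mul_nonneg (by norm_num) hform
    _ = _ := by
      simp only [incrementCovForm, mul_sum, abs_of_nonneg (ht _)]
      exact sum_congr rfl fun i _ => sum_congr rfl fun j _ => by ring
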